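/- Let A be a k-linear Hopf category with object class X, and let M be a Hopf module over A. Then for all x, y ∈ X and all m ∈ M_{x,y}, the element m_[0] S_{x,y}(m_[1]) of M_{x,x} is a coinvariant: ρ_{x,x}(m_[0] S_{x,y}(m_[1])) = m_[0] S_{x,y}(m_[1]) ⊗ 1_x. -/

import Mathlib

/-!
Compatibility turns `ρ (m₍₀₎ S m₍₁₎)` into `m₍₀₎ S(m₍₁₎)₍₁₎ ⊗ m₍₁₎ S(m₍₁₎)₍₂₎`. Since the antipode
reverses the comultiplication, `Δ (S h) = S h₍₂₎ ⊗ S h₍₁₎`, this is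
`m₍₀₎ S m₍₃₎ ⊗ m₍₁₎ S m₍₂₎ = m₍₀₎ S m₍₁₎ ⊗ 1`. The anti-comultiplicativity is the usual convolution
argument: `Δ ∘ S` is a right and `τ ∘ (S ⊗ S) ∘ Δ` a left convolution inverse of `Δ`, so they agree.
-/

open TensorProduct

section Convolution

variable {k M C B D E F G : Type*} [CommRing k]
  [AddCommGroup M] [Module k M] [AddCommGroup C] [Module k C]
  [AddCommGroup B] [Module k B] [AddCommGroup D] [Module k D] [AddCommGroup E] [Module k E]
  [AddCommGroup F] [Module k F] [AddCommGroup G] [Module k G]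

/-- In Sweedler notation, `convolve δ μ f g m = μ (f m₍₀₎) (g m₍₁₎)` where `δ m = m₍₀₎ ⊗ m₍₁₎`. -/
noncomputable def convolve (δ : M →ₗ[k] M ⊗[k] C) (μ : B →ₗ[k] D →ₗ[k] E)
    (f : M →ₗ[k] B) (g : C →ₗ[k] D) : M →ₗ[k] E :=
  lift μ ∘ₗ map f g ∘ₗ δ

theorem convolve_mk (δ : M →ₗ[k] M ⊗[k] C) : convolve δ (mk k M C) .id .id = δ := by
  rw [convolve, TensorProduct.map_id, lift_mk, LinearMap.id_comp, LinearMap.id_comp]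

theorem comp_convolve {B' D' E' : Type*} [AddCommGroup B'] [Module k B']
    [AddCommGroup D'] [Module k D'] [AddCommGroup E'] [Module k E']
    (δ : M →ₗ[k] M ⊗[k] C) {μ : B →ₗ[k] D →ₗ[k] E} {ν : B' →ₗ[k] D' →ₗ[k] E'}
    {φ : E →ₗ[k] E'} {φ₁ : B →ₗ[k] B'} {φ₂ : D →ₗ[k] D'}
    (h : ∀ b d, φ (μ b d) = ν (φ₁ b) (φ₂ d)) (f : M →ₗ[k] B) (g : C →ₗ[k] D) :
    convolve δ ν (φ₁ ∘ₗ f) (φ₂ ∘ₗ g) = φ ∘ₗ convolve δ μ f g := by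
  have hmap : lift ν ∘ₗ map (φ₁ ∘ₗ f) (φ₂ ∘ₗ g) = φ ∘ₗ lift μ ∘ₗ map f g :=
    TensorProduct.ext' fun m c => by simp [h]
  simp only [convolve, ← LinearMap.comp_assoc, hmap]

theorem convolve_assoc {Δ : C →ₗ[k] C ⊗[k] C} {δ : M →ₗ[k] M ⊗[k] C}
    (hδ : ∀ m, TensorProduct.assoc k M C C (map δ .id (δ m)) = map .id Δ (δ m))
    {H : Type*} [AddCommGroup H] [Module k H]
    {μ₁ : B →ₗ[k] D →ₗ[k] E} {μ₂ : E →ₗ[k] F →ₗ[k] G} {μ₃ : D →ₗ[k] F →ₗ[k] H}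
    {μ₄ : B →ₗ[k] H →ₗ[k] G}
    (h : ∀ b d e, μ₂ (μ₁ b d) e = μ₄ b (μ₃ d e))
    (f : M →ₗ[k] B) (g : C →ₗ[k] D) (g' : C →ₗ[k] F) :
    convolve δ μ₂ (convolve δ μ₁ f g) g' = convolve δ μ₄ f (convolve Δ μ₃ g g') := by
  have hmap : lift μ₂ ∘ₗ map (lift μ₁ ∘ₗ map f g) g' ∘ₗ
      (TensorProduct.assoc k M C C).symm.toLinearMap = lift μ₄ ∘ₗ map f (lift μ₃ ∘ₗ map g g') :=
    TensorProduct.ext_threefold' fun m c c' => by simp [h]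
  ext m
  calc lift μ₂ (map (lift μ₁ ∘ₗ map f g ∘ₗ δ) g' (δ m))
      = lift μ₂ (map (lift μ₁ ∘ₗ map f g) g' ((TensorProduct.assoc k M C C).symm
          (TensorProduct.assoc k M C C (map δ .id (δ m))))) := by
        rw [LinearEquiv.symm_apply_apply, map_map, LinearMap.comp_id]; rfl
    _ = lift μ₄ (map f (lift μ₃ ∘ₗ map g g') (map .id Δ (δ m))) := by
        rw [hδ]; exact congr($hmap (map .id Δ (δ m)))
    _ = lift μ₄ (map f (lift μ₃ ∘ₗ map g g' ∘ₗ Δ) (δ m)) := by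
        rw [map_map, LinearMap.comp_id]; rfl

theorem convolve_smulRight_left {Δ : C →ₗ[k] C ⊗[k] C} {ε : C →ₗ[k] k}
    (hε : ∀ c, TensorProduct.lid k C (map ε .id (Δ c)) = c)
    (μ : B →ₗ[k] D →ₗ[k] E) (b : B) (g : C →ₗ[k] D) :
    convolve Δ μ (ε.smulRight b) g = μ b ∘ₗ g := by
  have hmap : lift μ ∘ₗ map (ε.smulRight b) g
      = μ b ∘ₗ g ∘ₗ (TensorProduct.lid k C).toLinearMap ∘ₗ map ε .id :=
    TensorProduct.ext' fun c c' => by simp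
  ext c
  conv_rhs => rw [LinearMap.comp_apply, ← hε c]
  exact congr($hmap (Δ c))

theorem convolve_smulRight_right {Δ : C →ₗ[k] C ⊗[k] C} {ε : C →ₗ[k] k}
    (hε : ∀ c, TensorProduct.rid k C (map .id ε (Δ c)) = c)
    (μ : B →ₗ[k] D →ₗ[k] E) (f : C →ₗ[k] B) (d : D) :
    convolve Δ μ f (ε.smulRight d) = μ.flip d ∘ₗ f := by
  have hmap : lift μ ∘ₗ map f (ε.smulRight d)
      = μ.flip d ∘ₗ f ∘ₗ (TensorProduct.rid k C).toLinearMap ∘ₗ map .id ε :=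
    TensorProduct.ext' fun c c' => by simp
  ext c
  conv_rhs => rw [LinearMap.comp_apply, ← hε c]
  exact congr($hmap (Δ c))

theorem map_lift_tensorTensorTensorComm_tmul {B' D' E' : Type*} [AddCommGroup B'] [Module k B']
    [AddCommGroup D'] [Module k D'] [AddCommGroup E'] [Module k E']
    (μ : B →ₗ[k] D →ₗ[k] E) (ν : B' →ₗ[k] D' →ₗ[k] E') (u : B ⊗[k] B') (v : D ⊗[k] D') :
    map (lift μ) (lift ν) (tensorTensorTensorComm k B B' D D' (u ⊗ₜ v)) = map₂ μ ν u v := by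
  induction u using TensorProduct.induction_on with
  | zero => simp
  | add u u' hu hu' => simp [add_tmul, hu, hu']
  | tmul b b' =>
    induction v using TensorProduct.induction_on with
    | zero => simp
    | add v v' hv hv' => simp [tmul_add, hv, hv']
    | tmul d d' => simp

theorem map₂_map₂_assoc {H : Type*} [AddCommGroup H] [Module k H]
    {μ₁ : B →ₗ[k] D →ₗ[k] E} {μ₂ : E →ₗ[k] F →ₗ[k] G} {μ₃ : D →ₗ[k] F →ₗ[k] H}
    {μ₄ : B →ₗ[k] H →ₗ[k] G} (h : ∀ b d e, μ₂ (μ₁ b d) e = μ₄ b (μ₃ d e))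
    (u : B ⊗[k] B) (v : D ⊗[k] D) (w : F ⊗[k] F) :
    map₂ μ₂ μ₂ (map₂ μ₁ μ₁ u v) w = map₂ μ₄ μ₄ u (map₂ μ₃ μ₃ v w) := by
  induction u using TensorProduct.induction_on with
  | zero => simp
  | add u u' hu hu' => simp only [map_add, LinearMap.add_apply, hu, hu']
  | tmul b b' =>
    induction v using TensorProduct.induction_on with
    | zero => simp
    | add v v' hv hv' => simp only [map_add, LinearMap.add_apply, hv, hv']
    | tmul d d' =>
      induction w using TensorProduct.induction_on with
      | zero => simp
      | add w w' hw hw' => simp only [map_add, hw, hw']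
      | tmul e e' => simp [h]

theorem map₂_tmul_self_left {μ : D →ₗ[k] B →ₗ[k] B} {d : D} (hd : ∀ b, μ d b = b)
    (u : B ⊗[k] B) :
    map₂ μ μ (d ⊗ₜ d) u = u := by
  rw [map₂_apply_tmul, show μ d = .id from LinearMap.ext hd, map_id, LinearMap.id_apply]

theorem map₂_tmul_self_right {μ : B →ₗ[k] D →ₗ[k] B} {d : D} (hd : ∀ b, μ b d = b)
    (u : B ⊗[k] B) :
    map₂ μ μ u (d ⊗ₜ d) = u := by
  induction u using TensorProduct.induction_on with
  | zero => simp
  | add u u' hu hu' => simp [hu, hu']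
  | tmul b b' => simp [hd]

end Convolution

section HopfCategory

variable {k : Type*} [CommRing k] {X : Type*} {A : X → X → Type*}
  [∀ x y, AddCommGroup (A x y)] [∀ x y, Module k (A x y)]
  {Δ : ∀ x y, A x y →ₗ[k] A x y ⊗[k] A x y} {ε : ∀ x y, A x y →ₗ[k] k}
  {mul : ∀ x y z, A x y →ₗ[k] A y z →ₗ[k] A x z} {one : ∀ x, A x x}
  {S : ∀ x y, A x y →ₗ[k] A y x}

theorem convolve_comul_comul_comp_antipode
    (Δ_mul : ∀ x y z (a : A x y) (b : A y z),
      Δ x z (mul x y z a b)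
        = (TensorProduct.map (TensorProduct.lift (mul x y z)) (TensorProduct.lift (mul x y z)))
            ((TensorProduct.tensorTensorTensorComm k (A x y) (A x y) (A y z) (A y z))
              ((Δ x y a) ⊗ₜ[k] (Δ y z b))))
    (Δ_one : ∀ x, Δ x x (one x) = (one x) ⊗ₜ[k] (one x))
    (S_left : ∀ x y (h : A x y),
      (TensorProduct.lift (mul x y x)) ((TensorProduct.map LinearMap.id (S x y)) (Δ x y h))
        = ε x y h • one x)
    (x y : X) :
    convolve (Δ x y) (map₂ (mul x y x) (mul x y x)) (Δ x y) (Δ y x ∘ₗ S x y)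
      = (ε x y).smulRight (one x ⊗ₜ[k] one x) := by
  have hΔ := comp_convolve (Δ x y) (φ := Δ x x) (φ₁ := Δ x y) (φ₂ := Δ y x)
    (fun a b => by rw [Δ_mul, map_lift_tensorTensorTensorComm_tmul]) .id (S x y)
  rw [LinearMap.comp_id] at hΔ
  rw [hΔ, show convolve (Δ x y) (mul x y x) .id (S x y) = (ε x y).smulRight (one x) from
    LinearMap.ext (S_left x y)]
  ext h
  simp [Δ_one]

theorem convolve_flip_antipode_comul
    (coassoc : ∀ x y (a : A x y),
      (TensorProduct.assoc k (A x y) (A x y) (A x y))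
          ((TensorProduct.map (Δ x y) LinearMap.id) (Δ x y a))
        = (TensorProduct.map LinearMap.id (Δ x y)) (Δ x y a))
    (counit_left : ∀ x y (a : A x y),
      (TensorProduct.lid k (A x y)) ((TensorProduct.map (ε x y) LinearMap.id) (Δ x y a)) = a)
    (S_right : ∀ x y (h : A x y),
      (TensorProduct.lift (mul y x y)) ((TensorProduct.map (S x y) LinearMap.id) (Δ x y h))
        = ε x y h • one y)
    (x y : X) :
    convolve (Δ x y) (map₂ (mul y x y) (mul y x y))
        (convolve (Δ x y) (mk k (A y x) (A y x)).flip (S x y) (S x y)) (Δ x y)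
      = (ε x y).smulRight (one y ⊗ₜ[k] one y) := by
  have hS : convolve (Δ x y) (mul y x y) (S x y) .id = (ε x y).smulRight (one y) :=
    LinearMap.ext (S_right x y)
  -- `(S h₂ ⊗ S h₁) (h₃ ⊗ h₄) = S h₂ h₃ ⊗ S h₁ h₄`: contract the inner `S h₂ h₃` first.
  have inner : convolve (Δ x y) (LinearMap.rTensorHom (A x y) ∘ₗ mul y x y) (S x y) (Δ x y)
      = mk k (A y y) (A x y) (one y) := by
    calc _ = convolve (Δ x y) (LinearMap.rTensorHom (A x y) ∘ₗ mul y x y) (S x y)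
          (convolve (Δ x y) (mk k (A x y) (A x y)) .id .id) := by rw [convolve_mk]
      _ = convolve (Δ x y) (mk k (A y y) (A x y)) (convolve (Δ x y) (mul y x y) (S x y) .id) .id :=
          (convolve_assoc (coassoc x y) (fun _ _ _ => rfl) _ _ _).symm
      _ = mk k (A y y) (A x y) (one y) := by
          rw [hS, convolve_smulRight_left (counit_left x y), LinearMap.comp_id]
  calc _ = convolve (Δ x y) (LinearMap.lTensorHom (A y y) ∘ₗ mul y x y) (S x y)
        (convolve (Δ x y) (LinearMap.rTensorHom (A x y) ∘ₗ mul y x y) (S x y) (Δ x y)) :=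
        convolve_assoc (coassoc x y) (fun a b w => by
          simp [← LinearMap.lTensor_comp_rTensor]) _ _ _
    _ = mk k (A y y) (A y y) (one y) ∘ₗ convolve (Δ x y) (mul y x y) (S x y) .id := by
        rw [inner]
        simpa using comp_convolve (Δ x y) (φ := mk k (A y y) (A y y) (one y)) (φ₁ := .id)
          (φ₂ := mk k (A y y) (A x y) (one y)) (ν := LinearMap.lTensorHom (A y y) ∘ₗ mul y x y)
          (fun _ _ => rfl) (S x y) .id
    _ = (ε x y).smulRight (one y ⊗ₜ[k] one y) := by
        rw [hS]; ext h; simp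

theorem comul_comp_antipode
    (coassoc : ∀ x y (a : A x y),
      (TensorProduct.assoc k (A x y) (A x y) (A x y))
          ((TensorProduct.map (Δ x y) LinearMap.id) (Δ x y a))
        = (TensorProduct.map LinearMap.id (Δ x y)) (Δ x y a))
    (counit_left : ∀ x y (a : A x y),
      (TensorProduct.lid k (A x y)) ((TensorProduct.map (ε x y) LinearMap.id) (Δ x y a)) = a)
    (counit_right : ∀ x y (a : A x y),
      (TensorProduct.rid k (A x y)) ((TensorProduct.map LinearMap.id (ε x y)) (Δ x y a)) = a)
    (mul_assoc' : ∀ x y z w (a : A x y) (b : A y z) (c : A z w),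
      mul x z w (mul x y z a b) c = mul x y w a (mul y z w b c))
    (one_mul' : ∀ x y (a : A x y), mul x x y (one x) a = a)
    (mul_one' : ∀ x y (a : A x y), mul x y y a (one y) = a)
    (Δ_mul : ∀ x y z (a : A x y) (b : A y z),
      Δ x z (mul x y z a b)
        = (TensorProduct.map (TensorProduct.lift (mul x y z)) (TensorProduct.lift (mul x y z)))
            ((TensorProduct.tensorTensorTensorComm k (A x y) (A x y) (A y z) (A y z))
              ((Δ x y a) ⊗ₜ[k] (Δ y z b))))
    (Δ_one : ∀ x, Δ x x (one x) = (one x) ⊗ₜ[k] (one x))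
    (S_left : ∀ x y (h : A x y),
      (TensorProduct.lift (mul x y x)) ((TensorProduct.map LinearMap.id (S x y)) (Δ x y h))
        = ε x y h • one x)
    (S_right : ∀ x y (h : A x y),
      (TensorProduct.lift (mul y x y)) ((TensorProduct.map (S x y) LinearMap.id) (Δ x y h))
        = ε x y h • one y)
    (x y : X) :
    Δ y x ∘ₗ S x y = convolve (Δ x y) (mk k (A y x) (A y x)).flip (S x y) (S x y) := by
  calc Δ y x ∘ₗ S x y
      = convolve (Δ x y) (map₂ (mul y y x) (mul y y x)) ((ε x y).smulRight (one y ⊗ₜ[k] one y))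
          (Δ y x ∘ₗ S x y) := by
        rw [convolve_smulRight_left (counit_left x y)]
        ext h
        exact (map₂_tmul_self_left (one_mul' y x) _).symm
    _ = convolve (Δ x y) (map₂ (mul y y x) (mul y y x))
          (convolve (Δ x y) (map₂ (mul y x y) (mul y x y))
            (convolve (Δ x y) (mk k (A y x) (A y x)).flip (S x y) (S x y)) (Δ x y))
          (Δ y x ∘ₗ S x y) := by
        rw [convolve_flip_antipode_comul coassoc counit_left S_right]
    _ = convolve (Δ x y) (map₂ (mul y x x) (mul y x x))
          (convolve (Δ x y) (mk k (A y x) (A y x)).flip (S x y) (S x y))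
          (convolve (Δ x y) (map₂ (mul x y x) (mul x y x)) (Δ x y) (Δ y x ∘ₗ S x y)) :=
        convolve_assoc (coassoc x y) (map₂_map₂_assoc (mul_assoc' y x y x)) _ _ _
    _ = convolve (Δ x y) (mk k (A y x) (A y x)).flip (S x y) (S x y) := by
        rw [convolve_comul_comul_comp_antipode Δ_mul Δ_one S_left,
          convolve_smulRight_right (counit_right x y)]
        ext h
        exact map₂_tmul_self_right (mul_one' y x) _

theorem convolve_lTensor_mul_flip_antipode
    (coassoc : ∀ x y (a : A x y),
      (TensorProduct.assoc k (A x y) (A x y) (A x y))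
          ((TensorProduct.map (Δ x y) LinearMap.id) (Δ x y a))
        = (TensorProduct.map LinearMap.id (Δ x y)) (Δ x y a))
    (counit_left : ∀ x y (a : A x y),
      (TensorProduct.lid k (A x y)) ((TensorProduct.map (ε x y) LinearMap.id) (Δ x y a)) = a)
    (S_left : ∀ x y (h : A x y),
      (TensorProduct.lift (mul x y x)) ((TensorProduct.map LinearMap.id (S x y)) (Δ x y h))
        = ε x y h • one x)
    (x y : X) :
    convolve (Δ x y) (LinearMap.lTensorHom (A y x) ∘ₗ mul x y x) .id
        (convolve (Δ x y) (mk k (A y x) (A y x)).flip (S x y) (S x y))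
      = (mk k (A y x) (A x x)).flip (one x) ∘ₗ S x y := by
  calc _ = convolve (Δ x y) (mk k (A y x) (A x x)).flip
        (convolve (Δ x y) (mul x y x) .id (S x y)) (S x y) :=
        (convolve_assoc (coassoc x y) (fun _ _ _ => rfl) _ _ _).symm
    _ = (mk k (A y x) (A x x)).flip (one x) ∘ₗ S x y := by
        rw [show convolve (Δ x y) (mul x y x) .id (S x y) = (ε x y).smulRight (one x) from
          LinearMap.ext (S_left x y), convolve_smulRight_left (counit_left x y)]

end HopfCategory

theorem hopf_module_coinvariant_element
    {k : Type*} [CommRing k] {X : Type*}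
    (A : X → X → Type*)
    [∀ x y, AddCommGroup (A x y)] [∀ x y, Module k (A x y)]
    (Δ : ∀ x y, A x y →ₗ[k] A x y ⊗[k] A x y)
    (ε : ∀ x y, A x y →ₗ[k] k)
    (mul : ∀ x y z, A x y →ₗ[k] A y z →ₗ[k] A x z)
    (one : ∀ x, A x x)
    (coassoc : ∀ x y (a : A x y),
      (TensorProduct.assoc k (A x y) (A x y) (A x y))
          ((TensorProduct.map (Δ x y) LinearMap.id) (Δ x y a))
        = (TensorProduct.map LinearMap.id (Δ x y)) (Δ x y a))
    (counit_left : ∀ x y (a : A x y),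
      (TensorProduct.lid k (A x y)) ((TensorProduct.map (ε x y) LinearMap.id) (Δ x y a)) = a)
    (counit_right : ∀ x y (a : A x y),
      (TensorProduct.rid k (A x y)) ((TensorProduct.map LinearMap.id (ε x y)) (Δ x y a)) = a)
    (mul_assoc' : ∀ x y z w (a : A x y) (b : A y z) (c : A z w),
      mul x z w (mul x y z a b) c = mul x y w a (mul y z w b c))
    (one_mul' : ∀ x y (a : A x y), mul x x y (one x) a = a)
    (mul_one' : ∀ x y (a : A x y), mul x y y a (one y) = a)
    (Δ_mul : ∀ x y z (a : A x y) (b : A y z),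
      Δ x z (mul x y z a b)
        = (TensorProduct.map (TensorProduct.lift (mul x y z)) (TensorProduct.lift (mul x y z)))
            ((TensorProduct.tensorTensorTensorComm k (A x y) (A x y) (A y z) (A y z))
              ((Δ x y a) ⊗ₜ[k] (Δ y z b))))
    (Δ_one : ∀ x, Δ x x (one x) = (one x) ⊗ₜ[k] (one x))
    (S : ∀ x y, A x y →ₗ[k] A y x)
    (S_left : ∀ x y (h : A x y),
      (TensorProduct.lift (mul x y x)) ((TensorProduct.map LinearMap.id (S x y)) (Δ x y h))
        = ε x y h • one x)
    (S_right : ∀ x y (h : A x y),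
      (TensorProduct.lift (mul y x y)) ((TensorProduct.map (S x y) LinearMap.id) (Δ x y h))
        = ε x y h • one y)
    (M : X → X → Type*)
    [∀ x y, AddCommGroup (M x y)] [∀ x y, Module k (M x y)]
    (ψ : ∀ x y z, M x y →ₗ[k] A y z →ₗ[k] M x z)
    (ρ : ∀ x y, M x y →ₗ[k] M x y ⊗[k] A x y)
    (ρ_coassoc : ∀ x y (m : M x y),
      (TensorProduct.map (ρ x y) LinearMap.id) (ρ x y m)
        = (TensorProduct.assoc k (M x y) (A x y) (A x y)).symm
            ((TensorProduct.map LinearMap.id (Δ x y)) (ρ x y m)))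
    (ρ_compat : ∀ x y z (m : M x y) (a : A y z),
      ρ x z (ψ x y z m a)
        = (TensorProduct.map (TensorProduct.lift (ψ x y z)) (TensorProduct.lift (mul x y z)))
            ((TensorProduct.tensorTensorTensorComm k (M x y) (A x y) (A y z) (A y z))
              ((ρ x y m) ⊗ₜ[k] (Δ y z a))))
 :
    ∀ x y (m : M x y),
      ρ x x ((TensorProduct.lift (ψ x y x)) ((TensorProduct.map LinearMap.id (S x y)) (ρ x y m)))
        = ((TensorProduct.lift (ψ x y x)) ((TensorProduct.map LinearMap.id (S x y)) (ρ x y m)))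
            ⊗ₜ[k] one x := by
  intro x y m
  have hρ (m : M x y) : TensorProduct.assoc k (M x y) (A x y) (A x y)
      (map (ρ x y) .id (ρ x y m)) = map .id (Δ x y) (ρ x y m) := by
    rw [ρ_coassoc, LinearEquiv.apply_symm_apply]
  have key : ρ x x ∘ₗ convolve (ρ x y) (ψ x y x) .id (S x y)
      = (mk k (M x x) (A x x)).flip (one x) ∘ₗ convolve (ρ x y) (ψ x y x) .id (S x y) := calc
    _ = convolve (ρ x y) (map₂ (ψ x y x) (mul x y x)) (ρ x y) (Δ y x ∘ₗ S x y) := by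
        simpa using (comp_convolve (ρ x y) (φ := ρ x x) (φ₁ := ρ x y) (φ₂ := Δ y x)
          (fun n a => by rw [ρ_compat, map_lift_tensorTensorTensorComm_tmul]) .id (S x y)).symm
    _ = convolve (ρ x y) (map₂ (ψ x y x) (mul x y x))
          (convolve (ρ x y) (mk k (M x y) (A x y)) .id .id)
          (convolve (Δ x y) (mk k (A y x) (A y x)).flip (S x y) (S x y)) := by
        rw [convolve_mk, comul_comp_antipode coassoc counit_left counit_right mul_assoc' one_mul'
          mul_one' Δ_mul Δ_one S_left S_right]
    _ = convolve (ρ x y) (LinearMap.rTensorHom (A x x) ∘ₗ ψ x y x) .id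
          (convolve (Δ x y) (LinearMap.lTensorHom (A y x) ∘ₗ mul x y x) .id
            (convolve (Δ x y) (mk k (A y x) (A y x)).flip (S x y) (S x y))) :=
        convolve_assoc hρ (fun n a w => by simp [← LinearMap.rTensor_comp_lTensor]) _ _ _
    _ = convolve (ρ x y) (LinearMap.rTensorHom (A x x) ∘ₗ ψ x y x) .id
          ((mk k (A y x) (A x x)).flip (one x) ∘ₗ S x y) := by
        rw [convolve_lTensor_mul_flip_antipode coassoc counit_left S_left]
    _ = _ := by
        simpa using comp_convolve (ρ x y) (φ := (mk k (M x x) (A x x)).flip (one x))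
          (φ₁ := .id) (φ₂ := (mk k (A y x) (A x x)).flip (one x)) (μ := ψ x y x)
          (fun _ _ => rfl) .id (S x y)
  exact congr($key m)
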